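/- Let M, X, Y be pairwise disjoint finite sets and let f_X, f_Y be polymatroids on M∪X and M∪Y whose restrictions to subsets of M coincide. If the tightened polymatroids f_X↓X and f_Y↓Y have an amalgam, then f_X and f_Y have an amalgam as well. -/

import Mathlib

open Finset

noncomputable section

variable {α : Type*} [DecidableEq α]

/-- `f` is a polymatroid with ground set `M`: it vanishes on `∅` and is
non-negative, monotone and submodular on subsets of `M`. -/
def IsPolymatroid (M : Finset α) (f : Finset α → ℝ) : Prop :=
  f ∅ = 0 ∧
  (∀ A, A ⊆ M → 0 ≤ f A) ∧
  (∀ A B, A ⊆ B → B ⊆ M → f A ≤ f B) ∧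
  (∀ A B, A ⊆ M → B ⊆ M → f (A ∪ B) + f (A ∩ B) ≤ f A + f B)

/-- `pmi f I J K` is the expression `f(I,J|K) = f(I∪K)+f(J∪K)−f(I∪J∪K)−f(K)`. -/
def pmi (f : Finset α → ℝ) (I J K : Finset α) : ℝ :=
  f (I ∪ K) + f (J ∪ K) - f (I ∪ J ∪ K) - f K

/-- `pcd f I K` is the expression `f(I|K) = f(I∪K) − f(K)`. -/
def pcd (f : Finset α → ℝ) (I K : Finset α) : ℝ := f (I ∪ K) - f K

/-- `runit A` is the rank function `r_A`: `r_A(I) = 1` if `A ∩ I ≠ ∅`, else `0`. -/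
def runit (A I : Finset α) : ℝ := if (A ∩ I).Nonempty then 1 else 0

/-- Tightening of `f` at `a` (relative to ground set `M`):
`f↓a = f − f(a|M∖{a})·r_{{a}}`. -/
def tightenAt (M : Finset α) (f : Finset α → ℝ) (a : α) : Finset α → ℝ :=
  fun I => f I - pcd f {a} (M \ {a}) * runit {a} I

/-- Polymatroids `fX` on `M ∪ X` and `fY` on `M ∪ Y` have an amalgam: a common
polymatroid extension on `M ∪ X ∪ Y`. -/
def HaveAmalgam (M X Y : Finset α) (fX fY : Finset α → ℝ) : Prop :=
  ∃ g : Finset α → ℝ, IsPolymatroid (M ∪ X ∪ Y) g ∧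
    (∀ A, A ⊆ M ∪ X → g A = fX A) ∧ (∀ A, A ⊆ M ∪ Y → g A = fY A)

/-- Polymatroids `fX` on `M ∪ X` and `fY` on `M ∪ Y` are adhesive: they have a
modular common extension, i.e. one with `g(X,Y|M) = 0`. -/
def Adhesive (M X Y : Finset α) (fX fY : Finset α → ℝ) : Prop :=
  ∃ g : Finset α → ℝ, IsPolymatroid (M ∪ X ∪ Y) g ∧
    (∀ A, A ⊆ M ∪ X → g A = fX A) ∧ (∀ A, A ⊆ M ∪ Y → g A = fY A) ∧
    pmi g X Y M = 0

/-! Tightening at `a` leaves `f(b | ground∖b)` unchanged for `b ≠ a`, so tightening `f` along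
`X` subtracts exactly `∑_{a ∈ X} f(a | ground∖a) · r_{a}`, a nonnegative combination of the
polymatroids `r_{a}`. Adding both corrections back to an amalgam `g`
of the tightenings gives a polymatroid; the correction for `Y` vanishes on subsets of `M ∪ X`,
and vice versa, so it extends `f_X` and `f_Y`. -/

lemma runit_singleton (a : α) (I : Finset α) : runit {a} I = if a ∈ I then 1 else 0 := by
  by_cases h : a ∈ I <;> simp [runit, h]

lemma isPolymatroid_runit (G A : Finset α) : IsPolymatroid G (runit A) := by
  refine ⟨by simp [runit], fun I _ => by unfold runit; split_ifs <;> norm_num,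
    fun I J hIJ _ => ?_, fun I J _ _ => ?_⟩
  · have hmono : (A ∩ I).Nonempty → (A ∩ J).Nonempty := (·.mono (inter_subset_inter_left hIJ))
    unfold runit
    split_ifs <;> grind
  · have hunion : (A ∩ (I ∪ J)).Nonempty → (A ∩ I).Nonempty ∨ (A ∩ J).Nonempty := by
      simp [inter_union_distrib_left, union_nonempty]
    have hinter : (A ∩ (I ∩ J)).Nonempty → (A ∩ I).Nonempty ∧ (A ∩ J).Nonempty := fun h =>
      ⟨h.mono (inter_subset_inter_left inter_subset_left),
        h.mono (inter_subset_inter_left inter_subset_right)⟩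
    unfold runit
    split_ifs <;> grind

lemma isPolymatroid_zero (G : Finset α) : IsPolymatroid G 0 := by
  simp [IsPolymatroid]

namespace IsPolymatroid

variable {G : Finset α} {f g : Finset α → ℝ}

lemma add (hf : IsPolymatroid G f) (hg : IsPolymatroid G g) : IsPolymatroid G (f + g) :=
  ⟨by simp [hf.1, hg.1], fun A hA => add_nonneg (hf.2.1 A hA) (hg.2.1 A hA),
    fun A B hAB hB => add_le_add (hf.2.2.1 A B hAB hB) (hg.2.2.1 A B hAB hB),
    fun A B hA hB => by
      simp only [Pi.add_apply]
      linarith [hf.2.2.2 A B hA hB, hg.2.2.2 A B hA hB]⟩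

lemma const_smul {c : ℝ} (hc : 0 ≤ c) (hf : IsPolymatroid G f) : IsPolymatroid G (c • f) :=
  ⟨by simp [hf.1], fun A hA => mul_nonneg hc (hf.2.1 A hA),
    fun A B hAB hB => mul_le_mul_of_nonneg_left (hf.2.2.1 A B hAB hB) hc,
    fun A B hA hB => by
      simp only [Pi.smul_apply, smul_eq_mul, ← mul_add]
      exact mul_le_mul_of_nonneg_left (hf.2.2.2 A B hA hB) hc⟩

lemma sum {ι : Type*} {S : Finset ι} {F : ι → Finset α → ℝ}
    (hF : ∀ i ∈ S, IsPolymatroid G (F i)) : IsPolymatroid G (∑ i ∈ S, F i) := by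
  classical
  induction S using Finset.induction_on with
  | empty => exact isPolymatroid_zero G
  | insert i S hi ih =>
    rw [sum_insert hi]
    exact (hF i (mem_insert_self i S)).add (ih fun j hj => hF j (mem_insert_of_mem hj))

lemma pcd_nonneg (hf : IsPolymatroid G f) {I K : Finset α} (h : I ∪ K ⊆ G) : 0 ≤ pcd f I K :=
  sub_nonneg.2 (hf.2.2.1 K (I ∪ K) subset_union_right h)

end IsPolymatroid

def tightenLoss (G : Finset α) (f : Finset α → ℝ) (S : Finset α) : Finset α → ℝ :=
  ∑ a ∈ S, pcd f {a} (G \ {a}) • runit {a}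

lemma IsPolymatroid.tightenLoss {G G' S : Finset α} {f : Finset α → ℝ}
    (hf : IsPolymatroid G f) (hS : S ⊆ G) : IsPolymatroid G' (tightenLoss G f S) :=
  IsPolymatroid.sum fun a ha => (isPolymatroid_runit G' {a}).const_smul <|
    hf.pcd_nonneg (union_subset (singleton_subset_iff.2 (hS ha)) sdiff_subset)

lemma tightenLoss_eq_zero_of_disjoint {G S I : Finset α} {f : Finset α → ℝ}
    (h : Disjoint S I) : tightenLoss G f S I = 0 := by
  refine (Finset.sum_apply I S _).trans (sum_eq_zero fun a ha => ?_)
  simp [runit_singleton, disjoint_left.1 h ha]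

lemma pcd_tightenAt_of_ne {G : Finset α} {f : Finset α → ℝ} {a b : α} (hab : a ≠ b) :
    pcd (tightenAt G f a) {b} (G \ {b}) = pcd f {b} (G \ {b}) := by
  simp only [pcd, tightenAt, runit_singleton, mem_union, mem_singleton, hab, false_or]
  ring

lemma tightenLoss_tightenAt {G S : Finset α} {f : Finset α → ℝ} {a : α} (ha : a ∉ S) :
    tightenLoss G (tightenAt G f a) S = tightenLoss G f S :=
  sum_congr rfl fun b hb => by rw [pcd_tightenAt_of_ne (ne_of_mem_of_not_mem hb ha).symm]

lemma foldl_tightenAt {G : Finset α} {l : List α} (hl : l.Nodup) (f : Finset α → ℝ) :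
    l.foldl (tightenAt G) f = f - tightenLoss G f l.toFinset := by
  induction l generalizing f with
  | nil => simp [tightenLoss]
  | cons a l ih =>
    obtain ⟨hal, hl⟩ := List.nodup_cons.1 hl
    have hal' : a ∉ l.toFinset := List.mem_toFinset.not.2 hal
    rw [List.foldl_cons, ih hl, tightenLoss_tightenAt hal', List.toFinset_cons]
    ext I
    simp only [tightenAt, tightenLoss, Pi.sub_apply, Pi.add_apply, Pi.smul_apply, smul_eq_mul,
      Finset.sum_apply, sum_insert hal']
    ring

theorem statement_8_general (M X Y : Finset α)
    (hMX : Disjoint M X) (hMY : Disjoint M Y) (hXY : Disjoint X Y)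
    (fX fY : Finset α → ℝ)
    (hfX : IsPolymatroid (M ∪ X) fX) (hfY : IsPolymatroid (M ∪ Y) fY)
    (lX lY : List α) (hlX : lX.Nodup) (hlXs : lX.toFinset = X)
    (hlY : lY.Nodup) (hlYs : lY.toFinset = Y)
    (h : HaveAmalgam M X Y (lX.foldl (tightenAt (M ∪ X)) fX)
          (lY.foldl (tightenAt (M ∪ Y)) fY)) :
    HaveAmalgam M X Y fX fY := by
  obtain ⟨g, hg, hgX, hgY⟩ := h
  rw [foldl_tightenAt hlX, hlXs] at hgX
  rw [foldl_tightenAt hlY, hlYs] at hgY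
  refine ⟨g + tightenLoss (M ∪ X) fX X + tightenLoss (M ∪ Y) fY Y,
    (hg.add (hfX.tightenLoss subset_union_right)).add (hfY.tightenLoss subset_union_right),
    fun A hA => ?_, fun A hA => ?_⟩
  · have hYA : Disjoint Y A := (disjoint_union_right.2 ⟨hMY.symm, hXY.symm⟩).mono_right hA
    simp [hgX A hA, tightenLoss_eq_zero_of_disjoint hYA]
  · have hXA : Disjoint X A := (disjoint_union_right.2 ⟨hMX.symm, hXY⟩).mono_right hA
    simp [hgY A hA, tightenLoss_eq_zero_of_disjoint hXA]

/-- if the tightened polymatroids `f_X↓X` and `f_Y↓Y` (successive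
tightening along duplicate-free lists enumerating `X` and `Y`) have an amalgam,
then so do `f_X` and `f_Y`. -/
theorem statement_8 (M X Y : Finset α)
    (hMX : Disjoint M X) (hMY : Disjoint M Y) (hXY : Disjoint X Y)
    (fX fY : Finset α → ℝ)
    (hfX : IsPolymatroid (M ∪ X) fX) (hfY : IsPolymatroid (M ∪ Y) fY)
    (hcommon : ∀ A ⊆ M, fX A = fY A)
    (lX lY : List α) (hlX : lX.Nodup) (hlXs : lX.toFinset = X)
    (hlY : lY.Nodup) (hlYs : lY.toFinset = Y)
    (h : HaveAmalgam M X Y (lX.foldl (tightenAt (M ∪ X)) fX)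
          (lY.foldl (tightenAt (M ∪ Y)) fY)) :
    HaveAmalgam M X Y fX fY :=
  statement_8_general M X Y hMX hMY hXY fX fY hfX hfY lX lY hlX hlXs hlY hlYs h
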